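/- arXiv:1504.06147 — 4 statements merged into one kernel-verified Lean document; each statement's English description precedes it below -/
import Mathlib

section
/- For every s ≥ 0, F(√s) ≤ √(F(s)) ≤ 2·F(√s), where F(t) = t - log(1+t). -/
/-!
Put `t = √s`, so the claim reads `F t ^ 2 ≤ F (t ^ 2) ≤ 4 F t ^ 2`. All three functions vanish at
`t = 0`, so it suffices to compare derivatives: `(F t ^ 2)' = 2 t F t / (1 + t)`,
`(F (t ^ 2))' = 2 t³ / (1 + t²)`. These compare as claimed thanks to the elementary bounds
`t² / (2 (1 + t)) ≤ F t ≤ t² / (1 + t)` together with `(1 + t)² ≤ 2 (1 + t²) ≤ 2 (1 + t)²`.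
-/

open Real Set

lemma le_of_hasDerivAt_le {f g f' g' : ℝ → ℝ} {a b : ℝ} (hab : a ≤ b) (ha : f a ≤ g a)
    (hf : ∀ x ≥ a, HasDerivAt f (f' x) x) (hg : ∀ x ≥ a, HasDerivAt g (g' x) x)
    (hf'g' : ∀ x ≥ a, f' x ≤ g' x) : f b ≤ g b := by
  have hmono : MonotoneOn (g - f) (Ici a) := by
    refine monotoneOn_of_hasDerivWithinAt_nonneg (f' := g' - f') (convex_Ici a)
      (fun x hx => ((hg x hx).sub (hf x hx)).continuousAt.continuousWithinAt) ?_ ?_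
    · intro x hx
      rw [interior_Ici] at hx
      exact ((hg x hx.le).sub (hf x hx.le)).hasDerivWithinAt
    · intro x hx
      rw [interior_Ici] at hx
      exact sub_nonneg.2 (hf'g' x hx.le)
  have h := hmono self_mem_Ici hab hab
  simp only [Pi.sub_apply] at h
  linarith

noncomputable def F (t : ℝ) : ℝ := t - log (1 + t)

lemma hasDerivAt_F {x : ℝ} (hx : -1 < x) : HasDerivAt F (x / (1 + x)) x := by
  have h1x : 0 < 1 + x := by linarith
  have hlog : HasDerivAt (fun t => log (1 + t)) (1 / (1 + x)) x := by
    simpa using ((hasDerivAt_id' x).const_add 1).log h1x.ne'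
  refine ((hasDerivAt_id' x).fun_sub hlog).congr_deriv ?_
  field_simp
  ring

lemma hasDerivAt_F_sq {x : ℝ} (hx : -1 < x) :
    HasDerivAt (fun t => F t ^ 2) (2 * F x * (x / (1 + x))) x := by
  simpa using (hasDerivAt_F hx).fun_pow 2

lemma hasDerivAt_F_comp_sq (x : ℝ) :
    HasDerivAt (fun t => F (t ^ 2)) (x ^ 2 / (1 + x ^ 2) * (2 * x)) x := by
  have h := (hasDerivAt_F (x := x ^ 2) (by nlinarith)).comp (h := fun t => t ^ 2) x
    (hasDerivAt_pow 2 x)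
  simpa [Function.comp_def] using h

lemma F_nonneg {t : ℝ} (ht : -1 < t) : 0 ≤ F t := by
  have := log_le_sub_one_of_pos (show 0 < 1 + t by linarith)
  unfold F
  linarith

lemma F_mul_one_add_le_sq {t : ℝ} (ht : -1 < t) : F t * (1 + t) ≤ t ^ 2 := by
  have h1t : 0 < 1 + t := by linarith
  have hlog := one_sub_inv_le_log_of_pos h1t
  have : (1 - (1 + t)⁻¹) * (1 + t) = t := by field_simp; ring
  unfold F
  nlinarith

lemma sq_le_two_mul_one_add_mul_F {t : ℝ} (ht : 0 ≤ t) : t ^ 2 ≤ 2 * (1 + t) * F t := by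
  refine le_of_hasDerivAt_le (f := fun x => x ^ 2) (g := fun x => 2 * (1 + x) * F x) ht
    (by simp [F]) (fun x _ => hasDerivAt_pow 2 x)
    (fun x hx => (((hasDerivAt_id' x).const_add 1).const_mul 2).mul (hasDerivAt_F (by linarith)))
    fun x hx => ?_
  have h1x : 1 + x ≠ 0 := by positivity
  field_simp
  norm_num
  linarith [F_nonneg (show -1 < x by linarith)]

lemma sq_F_le_F_sq {t : ℝ} (ht : 0 ≤ t) : F t ^ 2 ≤ F (t ^ 2) := by
  refine le_of_hasDerivAt_le ht (by simp [F]) (fun x hx => hasDerivAt_F_sq (by linarith))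
    (fun x _ => hasDerivAt_F_comp_sq x) fun x hx => ?_
  have hF := F_nonneg (show -1 < x by linarith)
  have key : F x * (1 + x ^ 2) ≤ x ^ 2 * (1 + x) := by
    nlinarith [F_mul_one_add_le_sq (show -1 < x by linarith)]
  calc 2 * F x * (x / (1 + x)) = 2 * x / ((1 + x) * (1 + x ^ 2)) * (F x * (1 + x ^ 2)) := by
        field_simp
    _ ≤ 2 * x / ((1 + x) * (1 + x ^ 2)) * (x ^ 2 * (1 + x)) := by gcongr
    _ = x ^ 2 / (1 + x ^ 2) * (2 * x) := by field_simp

lemma F_sq_le_four_mul_F_sq {t : ℝ} (ht : 0 ≤ t) : F (t ^ 2) ≤ 4 * F t ^ 2 := by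
  refine le_of_hasDerivAt_le (g := fun x => 4 * F x ^ 2) ht (by simp [F])
    (fun x _ => hasDerivAt_F_comp_sq x)
    (fun x hx => (hasDerivAt_F_sq (by linarith)).const_mul 4) fun x hx => ?_
  have hF := F_nonneg (show -1 < x by linarith)
  have key : x ^ 2 * (1 + x) ≤ 4 * F x * (1 + x ^ 2) := by
    nlinarith [sq_le_two_mul_one_add_mul_F hx, sq_nonneg (x - 1)]
  calc x ^ 2 / (1 + x ^ 2) * (2 * x) = 2 * x / ((1 + x) * (1 + x ^ 2)) * (x ^ 2 * (1 + x)) := by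
        field_simp
    _ ≤ 2 * x / ((1 + x) * (1 + x ^ 2)) * (4 * F x * (1 + x ^ 2)) := by gcongr
    _ = 4 * (2 * F x * (x / (1 + x))) := by field_simp

theorem stmt_2 (s : ℝ) (hs : 0 ≤ s) :
    Real.sqrt s - Real.log (1 + Real.sqrt s) ≤ Real.sqrt (s - Real.log (1 + s)) ∧
    Real.sqrt (s - Real.log (1 + s)) ≤ 2 * (Real.sqrt s - Real.log (1 + Real.sqrt s)) := by
  obtain ⟨t, ht, rfl⟩ : ∃ t, 0 ≤ t ∧ t ^ 2 = s := ⟨√s, sqrt_nonneg s, sq_sqrt hs⟩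
  rw [sqrt_sq ht]
  change F t ≤ √(F (t ^ 2)) ∧ √(F (t ^ 2)) ≤ 2 * F t
  have hF := F_nonneg (show -1 < t by linarith)
  refine ⟨le_sqrt_of_sq_le (sq_F_le_F_sq ht), sqrt_le_iff.2 ⟨by positivity, ?_⟩⟩
  linarith [F_sq_le_four_mul_F_sq ht]
end

section
/- For any finite family of nonnegative reals s₁, …, s_k, we have ∑ᵢ F(sᵢ) ≥ (1/4)·F(√(∑ᵢ sᵢ²)), where F(t) = t - log(1+t). -/
/-!
Since `F(t) = t - log (1 + t)` is comparable to `g(t) = min (t ^ 2) t` up to a factor `4`,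
it suffices to show `g (√Q) ≤ ∑ g (sᵢ)` for `Q = ∑ sᵢ ^ 2`. With `T = ∑ g (sᵢ)`, every `sᵢ` is
at most `max 1 T` (when `sᵢ ≥ 1`, `g (sᵢ) = sᵢ` is a summand of `T`), so
`sᵢ ^ 2 ≤ g (sᵢ) * max 1 T` and `Q ≤ T * max 1 T = max T (T ^ 2)`.
-/

open Finset Real

lemma sq_div_two_mul_le_sub_log_one_add {t : ℝ} (ht : 0 ≤ t) :
    t ^ 2 / (2 * (1 + t)) ≤ t - log (1 + t) := by
  have hpos : 0 < 1 + t := by linarith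
  have hsinh : log (1 + t) ≤ ((1 + t) - (1 + t)⁻¹) / 2 := by
    rw [← sinh_log hpos]
    exact self_le_sinh_iff.mpr (log_nonneg (by linarith))
  have hid : t - ((1 + t) - (1 + t)⁻¹) / 2 = t ^ 2 / (2 * (1 + t)) := by
    field_simp
    ring
  linarith

lemma min_sq_self_div_four_le_sub_log_one_add {t : ℝ} (ht : 0 ≤ t) :
    min (t ^ 2) t / 4 ≤ t - log (1 + t) := by
  refine le_trans ?_ (sq_div_two_mul_le_sub_log_one_add ht)
  rw [div_le_div_iff₀ (by norm_num) (by positivity)]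
  rcases le_total t 1 with h | h
  · nlinarith [min_le_left (t ^ 2) t, sq_nonneg t]
  · nlinarith [min_le_right (t ^ 2) t]

lemma sub_log_one_add_le_min_sq_self {t : ℝ} (ht : 0 ≤ t) :
    t - log (1 + t) ≤ min (t ^ 2) t := by
  have hpos : 0 < 1 + t := by linarith
  have hlog : 1 - (1 + t)⁻¹ ≤ log (1 + t) := one_sub_inv_le_log_of_pos hpos
  have hid : t - (1 - (1 + t)⁻¹) = t ^ 2 / (1 + t) := by
    field_simp
    ring
  have hdiv : t ^ 2 / (1 + t) ≤ t ^ 2 := div_le_self (sq_nonneg t) (by linarith)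
  exact le_min (by linarith) (by linarith [log_nonneg (show 1 ≤ 1 + t by linarith)])

lemma sq_le_min_sq_self_mul_max_one {s T : ℝ} (hs : 0 ≤ s) (hsT : min (s ^ 2) s ≤ T) :
    s ^ 2 ≤ min (s ^ 2) s * max 1 T := by
  rcases le_total s 1 with h | h
  · rw [min_eq_left (by nlinarith)]
    exact le_mul_of_one_le_right (sq_nonneg s) (le_max_left 1 T)
  · rw [min_eq_right (by nlinarith)] at hsT ⊢
    nlinarith [le_max_right 1 T]

lemma min_sq_self_sqrt_sum_sq_le_sum {ι : Type*} (S : Finset ι) (s : ι → ℝ)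
    (hs : ∀ i ∈ S, 0 ≤ s i) :
    min (√(∑ i ∈ S, s i ^ 2) ^ 2) √(∑ i ∈ S, s i ^ 2) ≤ ∑ i ∈ S, min (s i ^ 2) (s i) := by
  set T := ∑ i ∈ S, min (s i ^ 2) (s i)
  have hT : 0 ≤ T := sum_nonneg fun i hi => le_min (sq_nonneg _) (hs i hi)
  have hQ : ∑ i ∈ S, s i ^ 2 ≤ T * max 1 T := by
    rw [sum_mul]
    refine sum_le_sum fun i hi => sq_le_min_sq_self_mul_max_one (hs i hi) ?_
    exact single_le_sum (fun j hj => le_min (sq_nonneg _) (hs j hj)) hi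
  rw [sq_sqrt (sum_nonneg fun i _ => sq_nonneg _)]
  rcases le_total T 1 with h | h
  · rw [max_eq_left h, mul_one] at hQ
    exact (min_le_left _ _).trans hQ
  · rw [max_eq_right h] at hQ
    exact (min_le_right _ _).trans (sqrt_le_iff.mpr ⟨hT, by nlinarith⟩)

theorem stmt_4 (k : ℕ) (s : Fin k → ℝ) (hs : ∀ i, 0 ≤ s i) :
    ∑ i, (s i - Real.log (1 + s i)) ≥
      (1/4) * (Real.sqrt (∑ i, (s i)^2) - Real.log (1 + Real.sqrt (∑ i, (s i)^2))) := by
  have hupper := sub_log_one_add_le_min_sq_self (sqrt_nonneg (∑ i, s i ^ 2))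
  have hkey := min_sq_self_sqrt_sum_sq_le_sum univ s fun i _ => hs i
  have hlower : (∑ i, min (s i ^ 2) (s i)) / 4 ≤ ∑ i, (s i - log (1 + s i)) := by
    rw [sum_div]
    exact sum_le_sum fun i _ => min_sq_self_div_four_le_sub_log_one_add (hs i)
  linarith
end

section
/- The function s ↦ √(s - log(1+s)) is concave on [0,∞). -/
/-! For a positive `C²` function `F`, `(√F)'' = (2 F F'' - F'²) / (4 F^{3/2})`, so `√F` is concave
exactly where `2 F F'' ≤ F'²`. For `F s = s - log (1 + s)` we have `F' s = s / (1 + s)` and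
`F'' s = 1 / (1 + s)²`, so the condition reads `2 (s - log (1 + s)) ≤ s²`, which follows from
the classical bound `2 s / (s + 2) ≤ log (1 + s)`. -/

open Real Set

theorem concaveOn_sqrt_of_two_mul_mul_le_sq {D : Set ℝ} (hD : Convex ℝ D) {F F' F'' : ℝ → ℝ}
    (hF : ContinuousOn F D) (hF_pos : ∀ x ∈ interior D, 0 < F x)
    (hF' : ∀ x ∈ interior D, HasDerivAt F (F' x) x)
    (hF'' : ∀ x ∈ interior D, HasDerivAt F' (F'' x) x)
    (h : ∀ x ∈ interior D, 2 * F x * F'' x ≤ F' x ^ 2) :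
    ConcaveOn ℝ D (fun x => √(F x)) := by
  have hsqrt : ∀ x ∈ interior D, HasDerivAt (fun x => √(F x)) (F' x / (2 * √(F x))) x :=
    fun x hx => (hF' x hx).sqrt (hF_pos x hx).ne'
  refine concaveOn_of_hasDerivWithinAt2_nonpos hD (continuous_sqrt.comp_continuousOn hF)
    (fun x hx => (hsqrt x hx).hasDerivWithinAt)
    (fun x hx => ((hF'' x hx).div ((hsqrt x hx).const_mul 2)
      (by have := sqrt_pos.2 (hF_pos x hx); positivity)).hasDerivWithinAt) ?_
  intro x hx
  have hS : 0 < √(F x) := sqrt_pos.2 (hF_pos x hx)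
  have hSq : √(F x) ^ 2 = F x := sq_sqrt (hF_pos x hx).le
  have key : F'' x * (2 * √(F x)) - F' x * (2 * (F' x / (2 * √(F x))))
      = (2 * F x * F'' x - F' x ^ 2) / √(F x) := by
    field_simp
    linear_combination 2 * F'' x * hSq
  rw [key]
  exact div_nonpos_of_nonpos_of_nonneg
    (div_nonpos_of_nonpos_of_nonneg (by linarith [h x hx]) hS.le) (by positivity)

theorem hasDerivAt_sub_log_one_add {x : ℝ} (hx : 1 + x ≠ 0) :
    HasDerivAt (fun s => s - log (1 + s)) (x / (1 + x)) x := by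
  have hlog : HasDerivAt (fun s => log (1 + s)) (1 / (1 + x)) x := by
    simpa using ((hasDerivAt_id x).const_add 1).log hx
  refine ((hasDerivAt_id' x).sub hlog).congr_deriv ?_
  field_simp
  ring

theorem hasDerivAt_div_one_add {x : ℝ} (hx : 1 + x ≠ 0) :
    HasDerivAt (fun s => s / (1 + s)) (1 / (1 + x) ^ 2) x := by
  refine ((hasDerivAt_id' x).div ((hasDerivAt_id' x).const_add 1) hx).congr_deriv ?_
  ring

theorem sub_log_one_add_pos {x : ℝ} (hx : 0 < x) : 0 < x - log (1 + x) := by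
  linarith [log_lt_sub_one_of_pos (by linarith : 0 < 1 + x) (by linarith : 1 + x ≠ 1)]

theorem two_mul_sub_log_one_add_le_sq {x : ℝ} (hx : 0 ≤ x) : 2 * (x - log (1 + x)) ≤ x ^ 2 := by
  have hlog := le_log_one_add_of_nonneg hx
  have hgap : x - x ^ 2 / 2 ≤ 2 * x / (x + 2) := by
    rw [le_div_iff₀ (by linarith)]
    nlinarith [pow_nonneg hx 3]
  linarith

theorem stmt_8 :
    ConcaveOn ℝ (Set.Ici (0:ℝ)) (fun s => Real.sqrt (s - Real.log (1 + s))) := by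
  refine concaveOn_sqrt_of_two_mul_mul_le_sq (F' := fun s => s / (1 + s))
    (F'' := fun s => 1 / (1 + s) ^ 2) (convex_Ici 0) ?_ ?_ ?_ ?_ ?_
  · exact continuousOn_id.sub
      (ContinuousOn.log (by fun_prop) fun x hx => by linarith [mem_Ici.1 hx])
  all_goals
    rw [interior_Ici]
    intro x (hx : 0 < x)
  · exact sub_log_one_add_pos hx
  · exact hasDerivAt_sub_log_one_add (by linarith)
  · exact hasDerivAt_div_one_add (by linarith)
  · rw [div_pow, mul_one_div, div_le_div_iff_of_pos_right (by positivity)]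
    exact two_mul_sub_log_one_add_le_sq hx.le
end

section
/- Let H be a nonnegative symmetric n×n matrix and F(t) = t - log(1+t) applied spectrally. Then for any unit vector v ∈ ℝⁿ, |F(H)v| ≥ (1/2)·√(F(|Hv|²)). -/
open Matrix

/-- A function `f : ℝ → ℝ` applied spectrally to a real symmetric matrix. -/
noncomputable def spectralApply {n : ℕ} {A : Matrix (Fin n) (Fin n) ℝ}
    (hA : A.IsHermitian) (f : ℝ → ℝ) : Matrix (Fin n) (Fin n) ℝ :=
  (hA.eigenvectorUnitary : Matrix (Fin n) (Fin n) ℝ) *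
    Matrix.diagonal (f ∘ hA.eigenvalues) *
    star (hA.eigenvectorUnitary : Matrix (Fin n) (Fin n) ℝ)

/-!
Diagonalise `H = U diag(λ) Uᵀ` and put `w i = (Uᵀ v) i ^ 2`, so that `∑ w = 1`,
`|Hv|² = ∑ w λ²` and `|F(H)v|² = ∑ w F(λ)²`. Jensen's inequality for the convex
function `F` gives `F(|Hv|²) ≤ ∑ w F(λ²)`, and the scalar inequality `F(t²) ≤ 4 F(t)²`
for `t ≥ 0` (that is, `√F(s) ≤ 2 F(√s)`) bounds this by `4 |F(H)v|²`.
-/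

open Set

noncomputable def logGap (t : ℝ) : ℝ := t - Real.log (1 + t)

lemma convexOn_logGap : ConvexOn ℝ (Ioi (-1)) logGap := by
  have hlog := strictConcaveOn_log_Ioi.concaveOn.translate_right (1 : ℝ)
  have hdom : (fun z : ℝ => 1 + z) ⁻¹' Ioi 0 = Ioi (-1) := by
    ext z
    simp [neg_lt_iff_pos_add']
  rw [hdom] at hlog
  exact (convexOn_id (convex_Ioi _)).sub hlog

lemma hasDerivAt_logGap {t : ℝ} (ht : -1 < t) : HasDerivAt logGap (t / (1 + t)) t := by
  have hpos : 1 + t ≠ 0 := by linarith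
  refine ((hasDerivAt_id' t).sub (((hasDerivAt_id' t).const_add 1).log hpos)).congr_deriv ?_
  field_simp
  ring

lemma sq_le_two_mul_one_add_mul_logGap {t : ℝ} (ht : 0 ≤ t) :
    t ^ 2 ≤ 2 * (1 + t) * logGap t := by
  have hpos : 0 < 1 + t := by linarith
  -- `u ≤ sinh u` at `u = log (1 + t)`
  have hsinh := Real.self_le_sinh_iff.2 (Real.log_nonneg (by linarith : (1 : ℝ) ≤ 1 + t))
  rw [Real.sinh_eq, Real.exp_neg, Real.exp_log hpos] at hsinh
  have hlog : 2 * (1 + t) * Real.log (1 + t) ≤ (1 + t) ^ 2 - 1 := by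
    have := mul_le_mul_of_nonneg_left hsinh (by linarith : (0 : ℝ) ≤ 2 * (1 + t))
    rwa [show 2 * (1 + t) * ((1 + t - (1 + t)⁻¹) / 2) = (1 + t) ^ 2 - 1 by field_simp] at this
  unfold logGap
  nlinarith

lemma logGap_sq_le {t : ℝ} (ht : 0 ≤ t) : logGap (t ^ 2) ≤ 4 * logGap t ^ 2 := by
  set φ : ℝ → ℝ := fun s => 4 * logGap s ^ 2 - logGap (s ^ 2)
  have hφ' : ∀ s, 0 ≤ s →
      HasDerivAt φ (8 * logGap s * (s / (1 + s)) - s ^ 2 / (1 + s ^ 2) * (2 * s)) s := by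
    intro s hs
    have h1 := hasDerivAt_logGap (by linarith : -1 < s)
    have h2 := HasDerivAt.comp (h := fun x : ℝ => x ^ 2) s
      (hasDerivAt_logGap (neg_one_lt_zero.trans_le (sq_nonneg s))) (hasDerivAt_pow 2 s)
    refine ((h1.pow 2).const_mul 4 |>.sub h2).congr_deriv ?_
    simp only [Nat.cast_ofNat]
    ring
  have hmono : MonotoneOn φ (Ici 0) := by
    refine monotoneOn_of_hasDerivWithinAt_nonneg (convex_Ici 0)
      (fun s hs => (hφ' s hs).continuousAt.continuousWithinAt)
      (fun s hs => (hφ' s (interior_subset hs)).hasDerivWithinAt) fun s hs => ?_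
    rw [interior_Ici, mem_Ioi] at hs
    have hA := sq_le_two_mul_one_add_mul_logGap hs.le
    have hN : 0 ≤ 4 * logGap s * (1 + s ^ 2) - s ^ 2 * (1 + s) := by
      nlinarith [mul_le_mul_of_nonneg_right hA (by positivity : (0 : ℝ) ≤ 1 + s ^ 2),
        sq_nonneg (s * (1 - s))]
    rw [show 8 * logGap s * (s / (1 + s)) - s ^ 2 / (1 + s ^ 2) * (2 * s)
        = 2 * s * (4 * logGap s * (1 + s ^ 2) - s ^ 2 * (1 + s)) / ((1 + s) * (1 + s ^ 2)) by
      field_simp; ring]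
    exact div_nonneg (mul_nonneg (by positivity) hN) (by positivity)
  simpa [φ, logGap] using hmono self_mem_Ici (mem_Ici.2 ht) ht

lemma logGap_sum_mul_sq_le {ι : Type*} (s : Finset ι) {w μ : ι → ℝ}
    (hw : ∀ i ∈ s, 0 ≤ w i) (hw₁ : ∑ i ∈ s, w i = 1) (hμ : ∀ i ∈ s, 0 ≤ μ i) :
    logGap (∑ i ∈ s, w i * μ i ^ 2) ≤ 4 * ∑ i ∈ s, w i * logGap (μ i) ^ 2 :=
  calc logGap (∑ i ∈ s, w i * μ i ^ 2) ≤ ∑ i ∈ s, w i * logGap (μ i ^ 2) :=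
        convexOn_logGap.map_sum_le hw hw₁ fun i _ =>
          mem_Ioi.2 (neg_one_lt_zero.trans_le (sq_nonneg _))
    _ ≤ ∑ i ∈ s, w i * (4 * logGap (μ i) ^ 2) :=
        Finset.sum_le_sum fun i hi =>
          mul_le_mul_of_nonneg_left (logGap_sq_le (hμ i hi)) (hw i hi)
    _ = 4 * ∑ i ∈ s, w i * logGap (μ i) ^ 2 := by
        rw [Finset.mul_sum]
        exact Finset.sum_congr rfl fun i _ => by ring

lemma EuclideanSpace.norm_toLp_sq {ι : Type*} [Fintype ι] (u : ι → ℝ) :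
    ‖WithLp.toLp 2 u‖ ^ 2 = u ⬝ᵥ u := by
  rw [EuclideanSpace.real_norm_sq_eq (WithLp.toLp 2 u : EuclideanSpace ℝ ι)]
  simp [dotProduct, sq]

lemma Matrix.dotProduct_mulVec_self_of_mem_unitary {ι : Type*} [Fintype ι] [DecidableEq ι]
    {U : Matrix ι ι ℝ} (hU : U ∈ unitary (Matrix ι ι ℝ)) (z : ι → ℝ) :
    (U *ᵥ z) ⬝ᵥ (U *ᵥ z) = z ⬝ᵥ z := by
  rw [dotProduct_mulVec, ← mulVec_transpose, mulVec_mulVec,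
    ← conjTranspose_eq_transpose_of_trivial, ← star_eq_conjTranspose,
    Unitary.star_mul_self_of_mem hU, one_mulVec]

section spectralApply

variable {n : ℕ} {A : Matrix (Fin n) (Fin n) ℝ} (hA : A.IsHermitian)

local notation "U" => (hA.eigenvectorUnitary : Matrix (Fin n) (Fin n) ℝ)

lemma spectralApply_mulVec (f : ℝ → ℝ) (x : Fin n → ℝ) :
    spectralApply hA f *ᵥ x = U *ᵥ fun i => f (hA.eigenvalues i) * (star U *ᵥ x) i := by
  rw [spectralApply, ← mulVec_mulVec, ← mulVec_mulVec]
  congr 1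
  ext i
  rw [mulVec_diagonal]
  rfl

lemma spectralApply_id : spectralApply hA id = A := by
  conv_rhs => rw [hA.spectral_theorem, Unitary.conjStarAlgAut_apply]
  simp [spectralApply, RCLike.ofReal_real_eq_id]

lemma dotProduct_self_spectralApply_mulVec (f : ℝ → ℝ) (x : Fin n → ℝ) :
    (spectralApply hA f *ᵥ x) ⬝ᵥ (spectralApply hA f *ᵥ x) =
      ∑ i, (star U *ᵥ x) i ^ 2 * f (hA.eigenvalues i) ^ 2 := by
  rw [spectralApply_mulVec, dotProduct_mulVec_self_of_mem_unitary hA.eigenvectorUnitary.2]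
  simp only [dotProduct]
  exact Finset.sum_congr rfl fun i _ => by ring

end spectralApply

theorem stmt_19 (n : ℕ) (H : Matrix (Fin n) (Fin n) ℝ) (hH : H.PosSemidef)
    (v : EuclideanSpace ℝ (Fin n)) (hv : ‖v‖ = 1) :
    ‖(WithLp.equiv 2 (Fin n → ℝ)).symm
        ((spectralApply hH.1 (fun t => t - Real.log (1 + t))) *ᵥ (WithLp.equiv 2 (Fin n → ℝ)) v)‖
      ≥ (1/2) * Real.sqrt
          (‖(WithLp.equiv 2 (Fin n → ℝ)).symm (H *ᵥ (WithLp.equiv 2 (Fin n → ℝ)) v)‖^2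
            - Real.log (1 + ‖(WithLp.equiv 2 (Fin n → ℝ)).symm (H *ᵥ (WithLp.equiv 2 (Fin n → ℝ)) v)‖^2)) := by
  simp only [WithLp.equiv_symm_apply, WithLp.equiv_apply]
  set x := v.ofLp
  set y := star (hH.1.eigenvectorUnitary : Matrix (Fin n) (Fin n) ℝ) *ᵥ x
  have hw : ∑ i, y i ^ 2 = 1 := by
    have := dotProduct_mulVec_self_of_mem_unitary (Unitary.star_mem hH.1.eigenvectorUnitary.2) x
    rw [← EuclideanSpace.norm_toLp_sq x, WithLp.toLp_ofLp, hv, one_pow] at this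
    simpa [dotProduct, sq] using this
  have hHx : ‖WithLp.toLp 2 (H *ᵥ x)‖ ^ 2 = ∑ i, y i ^ 2 * hH.1.eigenvalues i ^ 2 := by
    conv_lhs => rw [← spectralApply_id hH.1]
    rw [EuclideanSpace.norm_toLp_sq, dotProduct_self_spectralApply_mulVec]
    rfl
  have hFx : ‖WithLp.toLp 2 (spectralApply hH.1 logGap *ᵥ x)‖ ^ 2 =
      ∑ i, y i ^ 2 * logGap (hH.1.eigenvalues i) ^ 2 := by
    rw [EuclideanSpace.norm_toLp_sq, dotProduct_self_spectralApply_mulVec]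
  have hkey : logGap (‖WithLp.toLp 2 (H *ᵥ x)‖ ^ 2) ≤
      (2 * ‖WithLp.toLp 2 (spectralApply hH.1 logGap *ᵥ x)‖) ^ 2 := by
    rw [hHx, mul_pow, hFx]
    linarith [logGap_sum_mul_sq_le Finset.univ (fun i _ => sq_nonneg (y i)) hw
      fun i _ => hH.eigenvalues_nonneg i]
  have := Real.sqrt_le_iff.2 ⟨by positivity, hkey⟩
  unfold logGap at this
  linarith
end
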